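/- Let X be a random variable on [0,1] whose density is the Bernstein density f(t) = Σ_{i=0}^m p_i β_{m,i}(t) with p_i ≥ 0 and Σ p_i = 1. Let μ = E[X] and σ² = Var(X). Then σ² = ((m+2)/(m+3))·Var(μ_I) + μ(1-μ)/(m+3), where I is a random index with P(I = i) = p_i and μ_i = (i+1)/(m+2) is the mean of Beta(i+1, m-i+1); in particular σ² ≥ μ(1-μ)/(m+3). -/

import Mathlib

/-!
The mixture is a two-stage experiment: draw `I` with `P(I = i) = p i`, then `X ~ Beta(I+1, m-I+1)`.
The `i`-th component has mean `μᵢ = (i+1)/(m+2)` and variance `μᵢ(1-μᵢ)/(m+3)`, so the law of total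
variance gives `σ² = Var(μ_I) + E[μ_I(1-μ_I)]/(m+3)`, and `E[μ_I(1-μ_I)] = μ(1-μ) - Var(μ_I)`
because `E[μ_I] = μ`.
-/

open Finset intervalIntegral

/-- Beta density `β_{m,i}(t) = (m+1) C(m,i) t^i (1-t)^(m-i)`. -/
noncomputable def bern (m i : ℕ) (t : ℝ) : ℝ :=
  (m + 1) * (Nat.choose m i) * t ^ i * (1 - t) ^ (m - i)

open Nat

theorem integral_pow_mul_one_sub_pow (a b : ℕ) :
    ∫ t in (0 : ℝ)..1, t ^ a * (1 - t) ^ b = (a ! * b ! : ℝ) / (a + b + 1)! := by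
  induction b generalizing a with
  | zero =>
    simp only [pow_zero, mul_one, integral_pow, factorial_zero, add_zero, factorial_succ]
    push_cast
    field_simp
    ring
  | succ b ih =>
    have hsplit : (fun t : ℝ => t ^ a * (1 - t) ^ (b + 1))
        = fun t => t ^ a * (1 - t) ^ b - t ^ (a + 1) * (1 - t) ^ b := by
      funext t; ring
    rw [hsplit, integral_sub (by apply Continuous.intervalIntegrable; fun_prop)
      (by apply Continuous.intervalIntegrable; fun_prop), ih, ih,
      show a + 1 + b + 1 = a + b + 1 + 1 by ring, show a + (b + 1) + 1 = a + b + 1 + 1 by ring]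
    simp only [factorial_succ]
    push_cast
    field_simp
    ring

theorem continuous_bern (m i : ℕ) : Continuous (bern m i) := by
  unfold bern; fun_prop

theorem integral_pow_mul_bern {m i : ℕ} (h : i ≤ m) (k : ℕ) :
    ∫ t in (0 : ℝ)..1, t ^ k * bern m i t = ((m + 1)! * (i + k)! : ℝ) / (i ! * (m + k + 1)!) := by
  have hchoose : (m.choose i * i ! * (m - i)! : ℝ) = m ! := by
    exact_mod_cast choose_mul_factorial_mul_factorial h
  have hbern : (fun t => t ^ k * bern m i t)
      = fun t => ((m + 1) * m.choose i : ℝ) * (t ^ (i + k) * (1 - t) ^ (m - i)) := by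
    funext t; unfold bern; ring
  rw [hbern, integral_const_mul, integral_pow_mul_one_sub_pow,
    show i + k + (m - i) + 1 = m + k + 1 by omega, factorial_succ m]
  push_cast
  rw [← hchoose]
  field_simp

theorem integral_bern {m i : ℕ} (h : i ≤ m) : ∫ t in (0 : ℝ)..1, bern m i t = 1 := by
  have h0 := integral_pow_mul_bern h 0
  simp only [pow_zero, one_mul, add_zero] at h0
  rw [h0, mul_comm, div_self (by positivity)]

noncomputable def bernMean (m i : ℕ) : ℝ := (i + 1) / (m + 2)

theorem integral_mul_bern {m i : ℕ} (h : i ≤ m) :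
    ∫ t in (0 : ℝ)..1, t * bern m i t = bernMean m i := by
  have := integral_pow_mul_bern h 1
  simp only [pow_one] at this
  rw [this, bernMean, show m + 1 + 1 = m + 2 by ring]
  simp only [factorial_succ]
  push_cast
  field_simp
  ring

theorem integral_sq_mul_bern {m i : ℕ} (h : i ≤ m) :
    ∫ t in (0 : ℝ)..1, t ^ 2 * bern m i t = bernMean m i * ((i + 2) / (m + 3)) := by
  rw [integral_pow_mul_bern h 2, bernMean]
  simp only [factorial_succ]
  push_cast
  field_simp
  ring

theorem integral_sub_sq_mul_bern {m i : ℕ} (h : i ≤ m) (c : ℝ) :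
    ∫ t in (0 : ℝ)..1, (t - c) ^ 2 * bern m i t
      = bernMean m i * (1 - bernMean m i) / (m + 3) + (bernMean m i - c) ^ 2 := by
  have hexpand : (fun t => (t - c) ^ 2 * bern m i t)
      = fun t => t ^ 2 * bern m i t - 2 * c * (t * bern m i t) + c ^ 2 * bern m i t := by
    funext t; ring
  have hb := continuous_bern m i
  rw [hexpand, integral_add, integral_sub, integral_const_mul, integral_const_mul,
    integral_sq_mul_bern h, integral_mul_bern h, integral_bern h, bernMean]
  · field_simp
    ring
  all_goals apply Continuous.intervalIntegrable; fun_prop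

theorem integral_mul_sum_mul_bern (m : ℕ) {g : ℝ → ℝ} (hg : Continuous g) (s : Finset ℕ)
    (p : ℕ → ℝ) :
    ∫ t in (0 : ℝ)..1, g t * ∑ i ∈ s, p i * bern m i t
      = ∑ i ∈ s, p i * ∫ t in (0 : ℝ)..1, g t * bern m i t := by
  have hb := continuous_bern m
  simp_rw [mul_sum, mul_left_comm (g _)]
  rw [integral_finsetSum fun i _ => by apply Continuous.intervalIntegrable; fun_prop]
  simp_rw [integral_const_mul]

theorem sum_mul_mul_one_sub_eq {ι : Type*} {s : Finset ι} {p x : ι → ℝ} {μ : ℝ}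
    (hp : ∑ i ∈ s, p i = 1) (hμ : ∑ i ∈ s, p i * x i = μ) :
    ∑ i ∈ s, p i * (x i * (1 - x i)) = μ * (1 - μ) - ∑ i ∈ s, p i * (x i - μ) ^ 2 := by
  rw [eq_sub_iff_add_eq, ← sum_add_distrib]
  calc ∑ i ∈ s, (p i * (x i * (1 - x i)) + p i * (x i - μ) ^ 2)
      = (1 - 2 * μ) * ∑ i ∈ s, p i * x i + μ ^ 2 * ∑ i ∈ s, p i := by
        rw [mul_sum, mul_sum, ← sum_add_distrib]
        exact sum_congr rfl fun i _ => by ring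
    _ = μ * (1 - μ) := by rw [hμ, hp]; ring

/-- Variance decomposition for a Bernstein (beta-mixture) density:
`σ² = ((m+2)/(m+3)) Var(μ_I) + μ(1-μ)/(m+3) ≥ μ(1-μ)/(m+3)`. -/
theorem stmt2 (m : ℕ) (p : ℕ → ℝ)
    (hp : ∀ i ∈ Finset.range (m + 1), 0 ≤ p i)
    (hp1 : ∑ i ∈ Finset.range (m + 1), p i = 1)
    (f : ℝ → ℝ) (hf : ∀ t, f t = ∑ i ∈ Finset.range (m + 1), p i * bern m i t)
    (μ σ2 varI : ℝ)
    (hμ : μ = ∫ t in (0 : ℝ)..1, t * f t)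
    (hσ2 : σ2 = ∫ t in (0 : ℝ)..1, (t - μ) ^ 2 * f t)
    (hvarI : varI = ∑ i ∈ Finset.range (m + 1),
      p i * (((i : ℝ) + 1) / ((m : ℝ) + 2) - μ) ^ 2) :
    σ2 = ((m : ℝ) + 2) / ((m : ℝ) + 3) * varI + μ * (1 - μ) / ((m : ℝ) + 3) ∧
      μ * (1 - μ) / ((m : ℝ) + 3) ≤ σ2 := by
  simp only [hf] at hμ hσ2
  replace hvarI : varI = ∑ i ∈ range (m + 1), p i * (bernMean m i - μ) ^ 2 := hvarI
  have hle : ∀ i ∈ range (m + 1), i ≤ m := fun i hi => Nat.lt_succ_iff.mp (mem_range.mp hi)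
  have hmean : ∑ i ∈ range (m + 1), p i * bernMean m i = μ := by
    rw [hμ, integral_mul_sum_mul_bern m (g := fun t => t) continuous_id]
    exact sum_congr rfl fun i hi => by rw [integral_mul_bern (hle i hi)]
  have htotal : σ2 = varI
      + (∑ i ∈ range (m + 1), p i * (bernMean m i * (1 - bernMean m i))) / (m + 3) := by
    rw [hσ2, integral_mul_sum_mul_bern m (by fun_prop), hvarI, sum_div, ← sum_add_distrib]
    refine sum_congr rfl fun i hi => ?_
    rw [integral_sub_sq_mul_bern (hle i hi)]
    ring
  have hdecomp : σ2 = ((m : ℝ) + 2) / ((m : ℝ) + 3) * varI + μ * (1 - μ) / ((m : ℝ) + 3) := by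
    rw [htotal, sum_mul_mul_one_sub_eq hp1 hmean, ← hvarI]
    field_simp
    ring
  have hvarI_nonneg : 0 ≤ varI :=
    hvarI ▸ sum_nonneg fun i hi => mul_nonneg (hp i hi) (sq_nonneg _)
  exact ⟨hdecomp, hdecomp ▸ le_add_of_nonneg_left (mul_nonneg (by positivity) hvarI_nonneg)⟩
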